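/- Let Ω ⊂ ℝ^n be a bounded C^{1,α} domain with α ∈ (0,s), let x₀ ∈ cl(Ω), R ∈ (0,1], β ∈ (0,1], and let g ∈ L¹(Ω∩B_{2R}(x₀)). Then there exists a constant c, depending only on n, β and Ω, such that for all x, y ∈ cl(Ω)∩B_{R/4}(x₀) which are Ω-Lebesgue points of g (i.e. the averages ⨍_{Ω∩B_ρ(x)} g dλ converge to g(x) as ρ → 0⁺, and similarly at y), one has |g(x) − g(y)| ≤ c (M^{#,Ω}_{β,R}(g)(x) + M^{#,Ω}_{β,R}(g)(y)) |x−y|^β. -/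

import Mathlib

open MeasureTheory Metric Set Filter
open scoped ENNReal NNReal Topology
attribute [local instance] Classical.propDecidable

noncomputable section

namespace NonlocalCZ

/-- Euclidean space `ℝ^n`. -/
abbrev Rn (n : ℕ) : Type := EuclideanSpace ℝ (Fin n)

/-- The last coordinate of a point of `ℝ^n`. -/
def lastCoord {n : ℕ} (x : Rn n) : ℝ :=
  if h : n = 0 then 0 else x ⟨n - 1, by omega⟩

/-- Gagliardo seminorm `[g]_{W^{σ,p}(Q)}`, valued in `ℝ≥0∞`. -/
def gagliardo (n : ℕ) (σ p : ℝ) (Q : Set (Rn n)) (g : Rn n → ℝ) : ℝ≥0∞ :=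
  (∫⁻ x in Q, ∫⁻ y in Q,
      ENNReal.ofReal (|g x - g y| ^ p / ‖x - y‖ ^ ((n : ℝ) + σ * p))) ^ (1 / p)

/-- `L^p` norm over a set, valued in `ℝ≥0∞`. -/
def lpNorm (n : ℕ) (p : ℝ) (E : Set (Rn n)) (g : Rn n → ℝ) : ℝ≥0∞ :=
  (∫⁻ x in E, ENNReal.ofReal (|g x| ^ p)) ^ (1 / p)

/-- `L^p` norm over a subset of the product space. -/
def lpNormProd (n : ℕ) (p : ℝ) (E : Set (Rn n × Rn n)) (g : Rn n × Rn n → ℝ) : ℝ≥0∞ :=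
  (∫⁻ q in E, ENNReal.ofReal (|g q| ^ p)) ^ (1 / p)

/-- `L^p` norm of an `ℝ≥0∞`-valued function over a set. -/
def lpNormE (n : ℕ) (p : ℝ) (E : Set (Rn n)) (g : Rn n → ℝ≥0∞) : ℝ≥0∞ :=
  (∫⁻ x in E, g x ^ p) ^ (1 / p)

/-- Membership in the fractional Sobolev space `W^{σ,p}(Q)`. -/
def MemW (n : ℕ) (σ p : ℝ) (Q : Set (Rn n)) (g : Rn n → ℝ) : Prop :=
  AEMeasurable g volume ∧ gagliardo n σ p Q g < ⊤ ∧ lpNorm n p Q g < ⊤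

/-- The norm of the tail space `L¹_{2s}(ℝ^n)`. -/
def tailNorm (n : ℕ) (s : ℝ) (g : Rn n → ℝ) : ℝ≥0∞ :=
  ∫⁻ y, ENNReal.ofReal (|g y| / (1 + ‖y‖) ^ ((n : ℝ) + 2 * s))

/-- The nonlocal tail `Tail(g; B_R(x₀))`. -/
def tail (n : ℕ) (s : ℝ) (g : Rn n → ℝ) (x₀ : Rn n) (R : ℝ) : ℝ≥0∞ :=
  ENNReal.ofReal (R ^ (2 * s)) *
    ∫⁻ y in (ball x₀ R)ᶜ, ENNReal.ofReal (|g y| / ‖y - x₀‖ ^ ((n : ℝ) + 2 * s))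

/-- Kernel coefficient with ellipticity constant `Λ`. -/
def IsKernel (n : ℕ) (Λ : ℝ) (A : Rn n → Rn n → ℝ) : Prop :=
  Measurable (fun q : Rn n × Rn n => A q.1 q.2) ∧
    (∀ x y, A x y = A y x) ∧ ∀ x y, Λ⁻¹ ≤ A x y ∧ A x y ≤ Λ

/-- Weak solution of `L_A u = f` in `D`: for all test functions `ψ ∈ W^{s,2}(ℝ^n)`
vanishing a.e. outside `D`, the double integral converges absolutely and the weak
formulation holds. -/
def IsWeakSol (n : ℕ) (s : ℝ) (A : Rn n → Rn n → ℝ) (D : Set (Rn n))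
    (f u : Rn n → ℝ) : Prop :=
  ∀ ψ : Rn n → ℝ, MemW n s 2 Set.univ ψ → (∀ᵐ x ∂volume, x ∉ D → ψ x = 0) →
    MeasureTheory.Integrable (fun q : Rn n × Rn n =>
      (u q.1 - u q.2) * (ψ q.1 - ψ q.2) * A q.1 q.2 / ‖q.1 - q.2‖ ^ ((n : ℝ) + 2 * s)) ∧
    ∫ q : Rn n × Rn n,
        (u q.1 - u q.2) * (ψ q.1 - ψ q.2) * A q.1 q.2 / ‖q.1 - q.2‖ ^ ((n : ℝ) + 2 * s)
      = ∫ x in D, f x * ψ x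

/-- Distance to the boundary of `Ω`. -/
def distB (n : ℕ) (Ω : Set (Rn n)) (x : Rn n) : ℝ := Metric.infDist x (frontier Ω)

/-- The quotient `u/d^s`. -/
def overDs (n : ℕ) (s : ℝ) (Ω : Set (Rn n)) (u : Rn n → ℝ) (x : Rn n) : ℝ :=
  u x / distB n Ω x ^ s

/-- Bounded `C^{1,α}` domain: near each boundary point, after a rigid motion, the domain
is the region above the graph of a `C^1` function with `α`-Hölder continuous gradient. -/
def IsC1Domain (n : ℕ) (α : ℝ) (Ω : Set (Rn n)) : Prop :=
  IsOpen Ω ∧ Bornology.IsBounded Ω ∧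
  ∀ z ∈ frontier Ω, ∃ (r : ℝ) (Ψ : Rn n ≃ᵢ Rn n) (γ : Rn n → ℝ),
    0 < r ∧ ContDiff ℝ 1 γ ∧
    (∃ C : ℝ, ∀ x y : Rn n, ‖fderiv ℝ γ x - fderiv ℝ γ y‖ ≤ C * ‖x - y‖ ^ α) ∧
    (∀ x y : Rn n, (∀ i : Fin n, (i : ℕ) ≠ n - 1 → x i = y i) → γ x = γ y) ∧
    Ψ '' (Ω ∩ ball z r) = {x ∈ Ψ '' ball z r | γ x < lastCoord x}

/-- Mean of a real function over a set (with respect to Lebesgue measure). -/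
def setAvg (n : ℕ) (E : Set (Rn n)) (g : Rn n → ℝ) : ℝ := ⨍ x in E, g x

/-- Mean of a kernel coefficient over `B × B`. -/
def kernelAvg (n : ℕ) (A : Rn n → Rn n → ℝ) (B : Set (Rn n)) : ℝ :=
  ⨍ q in B ×ˢ B, A q.1 q.2

/-- `(δ,R)`-vanishing condition in `B × B`. -/
def IsVanishing (n : ℕ) (δ R : ℝ) (B : Set (Rn n)) (A : Rn n → Rn n → ℝ) : Prop :=
  ∀ (x₀ : Rn n) (r : ℝ), 0 < r → r ≤ R → ball x₀ r ⊆ B →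
    ⨍ q in (ball x₀ r) ×ˢ (ball x₀ r), |A q.1 q.2 - kernelAvg n A (ball x₀ r)| ≤ δ

/-- Dini continuity of a kernel coefficient in `B × B` with modulus `ω`. -/
def DiniKernel (n : ℕ) (B : Set (Rn n)) (A : Rn n → Rn n → ℝ) (ω : ℝ → ℝ) : Prop :=
  (∀ ⦃a b : ℝ⦄, 0 ≤ a → a ≤ b → ω a ≤ ω b) ∧ ω 0 = 0 ∧ (∀ t, 0 ≤ t → 0 ≤ ω t) ∧
  (∀ x₁ x₂ y₁ y₂ : Rn n, x₁ ∈ B → x₂ ∈ B → y₁ ∈ B → y₂ ∈ B →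
      |A x₁ y₁ - A x₂ y₂| ≤ ω (max ‖x₁ - x₂‖ ‖y₁ - y₂‖)) ∧
  MeasureTheory.IntegrableOn (fun t => ω t / t) (Set.Ioo 0 1)

/-- `α`-Hölder continuity of a kernel coefficient in `B × B` with constant `K`. -/
def HolderKernel (n : ℕ) (α K : ℝ) (B : Set (Rn n)) (A : Rn n → Rn n → ℝ) : Prop :=
  ∀ x₁ x₂ y₁ y₂ : Rn n, x₁ ∈ B → x₂ ∈ B → y₁ ∈ B → y₂ ∈ B →
    |A x₁ y₁ - A x₂ y₂| ≤ K * max ‖x₁ - x₂‖ ‖y₁ - y₂‖ ^ α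

/-- Lorentz `L^{p,1}` norm: `∫_0^∞ |{x ∈ E : |f x| > t}|^{1/p} dt`. -/
def lorentz1 (n : ℕ) (p : ℝ) (E : Set (Rn n)) (f : Rn n → ℝ) : ℝ≥0∞ :=
  ∫⁻ t in Set.Ioi (0 : ℝ), (volume {x ∈ E | t < |f x|}) ^ (1 / p)

/-- Weak `L^{p,∞}` norm: `sup_{t>0} t |{x ∈ E : |f x| > t}|^{1/p}`. -/
def weakLp (n : ℕ) (p : ℝ) (E : Set (Rn n)) (f : Rn n → ℝ) : ℝ≥0∞ :=
  ⨆ t : {t : ℝ // 0 < t},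
    ENNReal.ofReal t.1 * (volume {x ∈ E | t.1 < |f x|}) ^ (1 / p)

/-- Essential supremum of `|g|` over a set. -/
def essSupOn (n : ℕ) (E : Set (Rn n)) (g : Rn n → ℝ) : ℝ≥0∞ :=
  essSup (fun x => ENNReal.ofReal |g x|) (volume.restrict E)

/-- Fractional maximal function `M^Ω_{β,R}`. -/
def fracMax (n : ℕ) (β R : ℝ) (Ω : Set (Rn n)) (g : Rn n → ℝ) (z : Rn n) : ℝ≥0∞ :=
  ⨆ ρ : {t : ℝ // 0 < t ∧ t < R},
    ENNReal.ofReal (ρ.1 ^ β) * ⨍⁻ x in Ω ∩ ball z ρ.1, ENNReal.ofReal |g x| ∂volume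

/-- Fractional sharp maximal function `M^{#,Ω}_{β,R}`. -/
def sharpMax (n : ℕ) (β R : ℝ) (Ω : Set (Rn n)) (g : Rn n → ℝ) (z : Rn n) : ℝ≥0∞ :=
  ⨆ ρ : {t : ℝ // 0 < t ∧ t ≤ R},
    ENNReal.ofReal (ρ.1 ^ (-β)) *
      ⨍⁻ x in Ω ∩ ball z ρ.1, ENNReal.ofReal |g x - setAvg n (Ω ∩ ball z ρ.1) g| ∂volume

/-- Truncated Wolff potential `W^g_{β,p}(z,r)`. -/
def wolff (n : ℕ) (β p : ℝ) (g : Rn n → ℝ≥0∞) (z : Rn n) (r : ℝ) : ℝ≥0∞ :=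
  ∫⁻ ρ in Set.Ioo (0 : ℝ) r,
    ((∫⁻ x in ball z ρ, g x) / ENNReal.ofReal (ρ ^ ((n : ℝ) - β * p))) ^ (1 / (p - 1)) *
      ENNReal.ofReal ρ⁻¹

/-- The quotient `u/φ` with the convention `0` where `φ = 0`. -/
def quotPhi {n : ℕ} (u φ : Rn n → ℝ) (x : Rn n) : ℝ := if φ x = 0 then 0 else u x / φ x

/-- Local excess functional `E_loc(u; B_ρ(z))`. -/
def elocE (n : ℕ) (u φ : Rn n → ℝ) (z : Rn n) (ρ : ℝ) : ℝ≥0∞ :=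
  ⨍⁻ x in ball z ρ, ENNReal.ofReal |quotPhi u φ x - setAvg n (ball z ρ) (quotPhi u φ)| ∂volume

/-- Excess functional `E(u; B_ρ(z))` with tail term. -/
def excE (n : ℕ) (s : ℝ) (u φ : Rn n → ℝ) (z : Rn n) (ρ : ℝ) : ℝ≥0∞ :=
  elocE n u φ z ρ + ENNReal.ofReal (max (φ z) (ρ ^ s))⁻¹ *
    tail n s (fun y => u y - setAvg n (ball z ρ) (quotPhi u φ) * φ y) z ρ

/-!
Near a boundary point, a `C^{1,α}` domain is the region above a Lipschitz graph, so every ball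
`B_ρ(z)` centred in `cl Ω` contains a ball of radius `c ρ` lying in `Ω` (push the centre up
along the graph direction); by compactness of `∂Ω` the constant is uniform. Hence
`|Ω ∩ B_ρ(z)| ≥ κ |B_ρ(z)|` for `ρ ≤ 1`. With this lower density, the `Ω`-averages over two
nested balls of comparable radii `≤ ρ` differ by at most `C ρ^β M^#`. Telescoping along the
radii `2^{-k} ρ` down to a Lebesgue point `x` gives `|g(x) - (g)_{Ω ∩ B_ρ(x)}| ≤ C' ρ^β M^#(x)`,
and comparing the averages over `B_{2r}(x) ⊇ B_r(y)`, `r = |x - y|`, yields the estimate.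
-/

lemma edist_setAverage_le {α : Type*} [MeasurableSpace α] {μ : Measure α} {s t : Set α}
    {f : α → ℝ} (hst : s ⊆ t) (hs : μ s ≠ 0) (ht : μ t ≠ ∞) (hf : IntegrableOn f t μ) (a : ℝ) :
    edist (⨍ x in s, f x ∂μ) a ≤ (∫⁻ x in t, ENNReal.ofReal |f x - a| ∂μ) / μ s := by
  have hs' : μ s ≠ ∞ := ne_top_of_le_ne_top ht (measure_mono hst)
  have hfs : IntegrableOn f s μ := hf.mono_set hst
  have hsub : ⨍ x in s, f x ∂μ - a = ⨍ x in s, (f x - a) ∂μ := by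
    have : μ.real s ≠ 0 := (ENNReal.toReal_pos hs hs').ne'
    rw [setAverage_eq, setAverage_eq, integral_sub hfs (integrableOn_const hs'),
      setIntegral_const, smul_eq_mul, smul_eq_mul, smul_eq_mul]
    field_simp
  calc edist (⨍ x in s, f x ∂μ) a = ENNReal.ofReal |⨍ x in s, (f x - a) ∂μ| := by
        rw [edist_dist, Real.dist_eq, hsub]
    _ ≤ ENNReal.ofReal (⨍ x in s, |f x - a| ∂μ) := by
        gcongr
        rw [setAverage_eq, setAverage_eq, smul_eq_mul, smul_eq_mul, abs_mul, abs_inv,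
          abs_of_nonneg measureReal_nonneg]
        gcongr
        exact abs_integral_le_integral_abs
    _ = (∫⁻ x in s, ENNReal.ofReal |f x - a| ∂μ) / μ s :=
        ofReal_setAverage (hfs.sub (integrableOn_const hs')).abs
          (ae_of_all _ fun _ => abs_nonneg _)
    _ ≤ _ := by gcongr

section LowerDensity

variable {n : ℕ}

def HasLowerDensity (Ω : Set (Rn n)) (κ : ℝ≥0) : Prop :=
  ∀ z ∈ closure Ω, ∀ ρ : ℝ, 0 < ρ → ρ ≤ 1 → κ * volume (ball z ρ) ≤ volume (Ω ∩ ball z ρ)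

lemma setLAverage_le_sharpMax {β R : ℝ} {Ω : Set (Rn n)} {g : Rn n → ℝ} {z : Rn n} {ρ : ℝ}
    (hρ : 0 < ρ) (hρR : ρ ≤ R) :
    ⨍⁻ x in Ω ∩ ball z ρ, ENNReal.ofReal |g x - setAvg n (Ω ∩ ball z ρ) g| ∂volume ≤
      ENNReal.ofReal (ρ ^ β) * sharpMax n β R Ω g z := by
  calc _ = ENNReal.ofReal (ρ ^ β) * (ENNReal.ofReal (ρ ^ (-β)) *
        ⨍⁻ x in Ω ∩ ball z ρ, ENNReal.ofReal |g x - setAvg n (Ω ∩ ball z ρ) g| ∂volume) := by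
        rw [← mul_assoc, ← ENNReal.ofReal_mul (by positivity), ← Real.rpow_add hρ,
          add_neg_cancel, Real.rpow_zero, ENNReal.ofReal_one, one_mul]
    _ ≤ _ := by
      gcongr
      exact le_iSup (fun σ : {t : ℝ // 0 < t ∧ t ≤ R} => ENNReal.ofReal (σ.1 ^ (-β)) *
        ⨍⁻ x in Ω ∩ ball z σ.1, ENNReal.ofReal |g x - setAvg n (Ω ∩ ball z σ.1) g| ∂volume)
        ⟨ρ, hρ, hρR⟩

namespace HasLowerDensity

variable {Ω : Set (Rn n)} {κ : ℝ≥0} {β R : ℝ} {g : Rn n → ℝ}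

lemma volume_inter_ball_ne_zero (hΩ : HasLowerDensity Ω κ) (hκ : κ ≠ 0) {z : Rn n}
    (hz : z ∈ closure Ω) {ρ : ℝ} (hρ : 0 < ρ) (hρ1 : ρ ≤ 1) : volume (Ω ∩ ball z ρ) ≠ 0 :=
  fun h => (mul_ne_zero (ENNReal.coe_ne_zero.2 hκ) (measure_ball_pos volume z hρ).ne')
    (nonpos_iff_eq_zero.1 (h ▸ hΩ z hz ρ hρ hρ1))

lemma edist_setAvg_le_sharpMax (hΩ : HasLowerDensity Ω κ) (hκ : κ ≠ 0) (hR : R ≤ 1)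
    {z z' : Rn n} (hz' : z' ∈ closure Ω) {ρ ρ' : ℝ} (hρ' : 0 < ρ') (hρ'ρ : ρ' ≤ ρ)
    (hρ : ρ ≤ 2 * ρ') (hρR : ρ ≤ R) (hsub : ball z' ρ' ⊆ ball z ρ)
    (hg : IntegrableOn g (Ω ∩ ball z ρ)) :
    edist (setAvg n (Ω ∩ ball z' ρ') g) (setAvg n (Ω ∩ ball z ρ) g) ≤
      2 ^ n / κ * (ENNReal.ofReal (ρ ^ β) * sharpMax n β R Ω g z) := by
  set E := Ω ∩ ball z ρ
  set E' := Ω ∩ ball z' ρ'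
  have hE : volume E ≠ ∞ := measure_ne_top_of_subset inter_subset_right measure_ball_lt_top.ne
  have hE' : κ * volume (ball z' ρ') ≤ volume E' := hΩ z' hz' ρ' hρ' (by linarith)
  have hdoubling : volume E ≤ 2 ^ n / κ * volume E' :=
    calc volume E ≤ volume (ball z (2 * ρ')) :=
          measure_mono (inter_subset_right.trans (ball_subset_ball hρ))
      _ = 2 ^ n / κ * (κ * volume (ball z' ρ')) := by
          rw [Measure.addHaar_ball_mul_of_pos _ _ two_pos, Measure.addHaar_ball_center volume z',
            finrank_euclideanSpace_fin, ← mul_assoc,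
            ENNReal.div_mul_cancel (ENNReal.coe_ne_zero.2 hκ) ENNReal.coe_ne_top]
          norm_num
      _ ≤ 2 ^ n / κ * volume E' := by gcongr
  refine (edist_setAverage_le (inter_subset_inter_right _ hsub)
    (hΩ.volume_inter_ball_ne_zero hκ hz' hρ' (by linarith)) hE hg _).trans ?_
  rw [← measure_mul_setLAverage _ hE]
  refine ENNReal.div_le_of_le_mul ?_
  calc volume E * ⨍⁻ x in E, ENNReal.ofReal |g x - setAvg n E g| ∂volume
      ≤ 2 ^ n / κ * volume E' * (ENNReal.ofReal (ρ ^ β) * sharpMax n β R Ω g z) :=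
        mul_le_mul' hdoubling (setLAverage_le_sharpMax (hρ'.trans_le hρ'ρ) hρR)
    _ = _ := by ring

lemma edist_setAvg_le_sharpMax_of_tendsto (hΩ : HasLowerDensity Ω κ) (hκ : κ ≠ 0)
    (hR : R ≤ 1) {x : Rn n} (hx : x ∈ closure Ω) {ρ : ℝ} (hρ : 0 < ρ) (hρR : ρ ≤ R)
    (hg : IntegrableOn g (Ω ∩ ball x ρ))
    (hlim : Tendsto (fun r => setAvg n (Ω ∩ ball x r) g) (𝓝[>] 0) (𝓝 (g x))) :
    edist (setAvg n (Ω ∩ ball x ρ) g) (g x) ≤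
      2 ^ n / κ * (1 - ENNReal.ofReal (2⁻¹ ^ β))⁻¹ *
        (ENNReal.ofReal (ρ ^ β) * sharpMax n β R Ω g x) := by
  set q := ENNReal.ofReal (2⁻¹ ^ β)
  set M := ENNReal.ofReal (ρ ^ β) * sharpMax n β R Ω g x
  set r : ℕ → ℝ := fun k => 2⁻¹ ^ k * ρ
  have hr (k : ℕ) : 0 < r k := by positivity
  have hr_le (k : ℕ) : r k ≤ ρ :=
    mul_le_of_le_one_left hρ.le (pow_le_one₀ (by norm_num) (by norm_num))
  have hr_succ (k : ℕ) : r k = 2 * r (k + 1) := by simp only [r, pow_succ]; ring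
  have hr_pow (k : ℕ) : ENNReal.ofReal (r k ^ β) = q ^ k * ENNReal.ofReal (ρ ^ β) := by
    rw [Real.mul_rpow (by positivity) hρ.le, ← Real.rpow_pow_comm (by norm_num),
      ENNReal.ofReal_mul (by positivity), ENNReal.ofReal_pow (by positivity)]
  have hstep (k : ℕ) : edist (setAvg n (Ω ∩ ball x (r k)) g)
      (setAvg n (Ω ∩ ball x (r (k + 1))) g) ≤ 2 ^ n / κ * M * q ^ k := by
    have hk : r (k + 1) ≤ r k := by linarith [hr_succ k, hr (k + 1)]
    rw [edist_comm]
    refine (hΩ.edist_setAvg_le_sharpMax (β := β) hκ hR hx (hr (k + 1)) hk (hr_succ k).le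
      ((hr_le k).trans hρR) (ball_subset_ball hk)
      (hg.mono_set (inter_subset_inter_right _ (ball_subset_ball (hr_le k))))).trans_eq ?_
    rw [hr_pow]; ring
  have hr_lim : Tendsto r atTop (𝓝[>] 0) := by
    refine tendsto_nhdsWithin_iff.2 ⟨?_, Eventually.of_forall hr⟩
    have := (tendsto_pow_atTop_nhds_zero_of_lt_one (by norm_num : (0:ℝ) ≤ 2⁻¹)
      (by norm_num)).mul_const ρ
    rwa [zero_mul] at this
  calc edist (setAvg n (Ω ∩ ball x ρ) g) (g x) ≤ ∑' k, 2 ^ n / κ * M * q ^ k := by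
        simpa [r] using edist_le_tsum_of_edist_le_of_tendsto₀ _ hstep (hlim.comp hr_lim)
    _ = _ := by rw [ENNReal.tsum_mul_left, ENNReal.tsum_geometric]; ring

theorem edist_le_sharpMax (hΩ : HasLowerDensity Ω κ) (hκ : κ ≠ 0) (hβ : 0 ≤ β) (hR : R ≤ 1)
    {x y : Rn n} (hx : x ∈ closure Ω) (hy : y ∈ closure Ω) (hxyR : 2 * dist x y ≤ R)
    (hg : IntegrableOn g (Ω ∩ ball x (2 * dist x y)))
    (hlimx : Tendsto (fun r => setAvg n (Ω ∩ ball x r) g) (𝓝[>] 0) (𝓝 (g x)))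
    (hlimy : Tendsto (fun r => setAvg n (Ω ∩ ball y r) g) (𝓝[>] 0) (𝓝 (g y))) :
    edist (g x) (g y) ≤
      2 ^ n / κ * ENNReal.ofReal (2 ^ β) * ((1 - ENNReal.ofReal (2⁻¹ ^ β))⁻¹ + 1) *
        (sharpMax n β R Ω g x + sharpMax n β R Ω g y) * ENNReal.ofReal (dist x y ^ β) := by
  rcases eq_or_ne x y with rfl | hxy
  · simp
  set r := dist x y
  have hr : 0 < r := dist_pos.2 hxy
  set D : ℝ≥0∞ := 2 ^ n / κ
  set P := ENNReal.ofReal (2 ^ β)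
  set T := (1 - ENNReal.ofReal (2⁻¹ ^ β))⁻¹
  have hball : ball y r ⊆ ball x (2 * r) := ball_subset_ball' (by rw [dist_comm]; linarith)
  have h2r : ENNReal.ofReal ((2 * r) ^ β) = P * ENNReal.ofReal (r ^ β) := by
    rw [Real.mul_rpow zero_le_two hr.le, ENNReal.ofReal_mul (by positivity)]
  have hP : 1 ≤ P := ENNReal.one_le_ofReal.2 (Real.one_le_rpow one_le_two hβ)
  have hT : T ≤ P * (T + 1) :=
    calc T ≤ 1 * (T + 1) := by rw [one_mul]; exact le_self_add
      _ ≤ P * (T + 1) := by gcongr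
  calc edist (g x) (g y)
      ≤ edist (g x) (setAvg n (Ω ∩ ball x (2 * r)) g) +
          edist (setAvg n (Ω ∩ ball x (2 * r)) g) (setAvg n (Ω ∩ ball y r) g) +
          edist (setAvg n (Ω ∩ ball y r) g) (g y) := edist_triangle4 _ _ _ _
    _ ≤ D * T * (P * ENNReal.ofReal (r ^ β) * sharpMax n β R Ω g x) +
          D * (P * ENNReal.ofReal (r ^ β) * sharpMax n β R Ω g x) +
          D * T * (ENNReal.ofReal (r ^ β) * sharpMax n β R Ω g y) := by
        rw [edist_comm (g x), edist_comm _ (setAvg n (Ω ∩ ball y r) g), ← h2r]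
        gcongr
        · exact hΩ.edist_setAvg_le_sharpMax_of_tendsto hκ hR hx (by positivity) hxyR hg hlimx
        · exact hΩ.edist_setAvg_le_sharpMax hκ hR hy hr (by linarith) le_rfl hxyR hball hg
        · exact hΩ.edist_setAvg_le_sharpMax_of_tendsto hκ hR hy hr (by linarith)
            (hg.mono_set (inter_subset_inter_right _ hball)) hlimy
    _ = D * P * (T + 1) * sharpMax n β R Ω g x * ENNReal.ofReal (r ^ β) +
          D * T * sharpMax n β R Ω g y * ENNReal.ofReal (r ^ β) := by ring
    _ ≤ D * P * (T + 1) * sharpMax n β R Ω g x * ENNReal.ofReal (r ^ β) +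
          D * (P * (T + 1)) * sharpMax n β R Ω g y * ENNReal.ofReal (r ^ β) := by gcongr
    _ = _ := by ring

end HasLowerDensity

end LowerDensity

section InteriorBalls

variable {n : ℕ}

lemma ball_subset_epigraph {i : Fin n} {γ : Rn n → ℝ} {K : ℝ≥0} {w : Rn n} {ρ : ℝ}
    (hγi : ∀ (x : Rn n) (t : ℝ), γ (x + t • EuclideanSpace.single i 1) = γ x)
    (hγ : LipschitzOnWith K γ (ball w ρ)) (hw : γ w ≤ w i) (hρ : 0 < ρ) :
    ball (w + (ρ / 2) • EuclideanSpace.single i 1) (ρ / (4 * (K + 1))) ⊆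
      {x ∈ ball w ρ | γ x < x i} := by
  set e : Rn n := EuclideanSpace.single i 1
  intro v hv
  set δ := v - (w + (ρ / 2) • e)
  have hδ : ‖δ‖ < ρ / (4 * (K + 1)) := by rwa [mem_ball, dist_eq_norm] at hv
  have hδρ : ‖δ‖ < ρ / 4 := hδ.trans_le (div_le_div_of_nonneg_left hρ.le (by norm_num)
    (by linarith [K.coe_nonneg]))
  have hδi : |δ i| ≤ ‖δ‖ := by simpa using PiLp.norm_apply_le δ i
  have hv_i : v i = w i + ρ / 2 + δ i := by
    simp [δ, e]
  -- `v'` is `v` moved along `e` to the height of `w`: `γ` does not see the move.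
  set v' := w + (δ - δ i • e)
  have hv' : v = v' + (ρ / 2 + δ i) • e := by simp only [v', δ]; module
  have hv'w : ‖v' - w‖ ≤ 2 * ‖δ‖ :=
    calc ‖v' - w‖ = ‖δ - δ i • e‖ := by simp only [v', add_sub_cancel_left]
      _ ≤ ‖δ‖ + |δ i| := by simpa [e, norm_smul] using norm_sub_le δ (δ i • e)
      _ ≤ 2 * ‖δ‖ := by linarith
  have hvw : ‖v - w‖ < ρ :=
    calc ‖v - w‖ = ‖δ + (ρ / 2) • e‖ := by simp only [δ]; congr 1; abel
      _ ≤ ‖δ‖ + ρ / 2 := by simpa [e, norm_smul, abs_of_pos hρ] using norm_add_le δ ((ρ / 2) • e)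
      _ < ρ := by linarith
  have hγv : γ v ≤ w i + K * (2 * ‖δ‖) :=
    calc γ v = γ v' := by rw [hv', hγi]
      _ ≤ γ w + K * ‖v' - w‖ := by
        have := hγ.dist_le_mul v' (by rw [mem_ball, dist_eq_norm]; linarith) w (mem_ball_self hρ)
        rw [Real.dist_eq, dist_eq_norm] at this
        linarith [le_abs_self (γ v' - γ w)]
      _ ≤ w i + K * (2 * ‖δ‖) := by gcongr
  refine ⟨by rwa [mem_ball, dist_eq_norm], ?_⟩
  have : (2 * K + 1) * ‖δ‖ < ρ / 2 := by
    rw [lt_div_iff₀ (by positivity)] at hδ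
    nlinarith [norm_nonneg δ, K.coe_nonneg]
  linarith [abs_le.1 hδi]

def HasInteriorBalls (Ω : Set (Rn n)) (c : ℝ) (z : Rn n) : Prop :=
  ∀ ρ : ℝ, 0 < ρ → ρ ≤ c → ∃ p, ball p (c * ρ) ⊆ Ω ∩ ball z ρ

lemma HasInteriorBalls.mono {Ω : Set (Rn n)} {c c' : ℝ} {z : Rn n} (h : HasInteriorBalls Ω c z)
    (hc : c' ≤ c) : HasInteriorBalls Ω c' z := fun ρ hρ hρc =>
  (h ρ hρ (hρc.trans hc)).imp fun _ hp => (ball_subset_ball (by gcongr)).trans hp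

lemma eventually_hasInteriorBalls_of_chart {Ω : Set (Rn n)} {z : Rn n} {r : ℝ} (hr : 0 < r)
    {Ψ : Rn n ≃ᵢ Rn n} {γ : Rn n → ℝ} (hγ : ContDiff ℝ 1 γ) {i : Fin n}
    (hγi : ∀ (x : Rn n) (t : ℝ), γ (x + t • EuclideanSpace.single i 1) = γ x)
    (hΩ : Ψ '' (Ω ∩ ball z r) = {x ∈ Ψ '' ball z r | γ x < x i}) :
    ∃ c > 0, ∀ᶠ z' in 𝓝 z, z' ∈ closure Ω → HasInteriorBalls Ω c z' := by
  obtain ⟨K, hK⟩ : ∃ K, LipschitzOnWith K γ (ball (Ψ z) r) :=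
    ((hγ.locallyLipschitz.locallyLipschitzOn).exists_lipschitzOnWith_of_compact
      (isCompact_closedBall (Ψ z) r)).imp fun _ h => h.mono ball_subset_closedBall
  refine ⟨min (r / 2) (1 / (4 * (K + 1))), by positivity, ?_⟩
  filter_upwards [ball_mem_nhds z (half_pos hr)] with z' hz' hz'Ω ρ hρ hρc
  set w := Ψ z'
  have hwZ : ball w ρ ⊆ ball (Ψ z) r := by
    refine ball_subset_ball' ?_
    rw [Ψ.dist_eq]
    linarith [mem_ball.1 hz', min_le_left (r / 2) (1 / (4 * (K + 1)))]
  have hw : γ w ≤ w i := by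
    have hz'cl : z' ∈ closure (Ω ∩ ball z r) := by
      rw [inter_comm]; exact isOpen_ball.inter_closure ⟨ball_subset_ball (by linarith) hz', hz'Ω⟩
    refine closure_lt_subset_le hγ.continuous (PiLp.continuous_apply 2 _ i)
      (map_mem_closure Ψ.continuous hz'cl fun q hq => ?_)
    exact (hΩ ▸ mem_image_of_mem Ψ hq).2
  set p := w + (ρ / 2) • EuclideanSpace.single i 1
  refine ⟨Ψ.symm p, fun q hq => ?_⟩
  have hqp : Ψ q ∈ ball p (ρ / (4 * (K + 1))) := by
    rw [mem_ball, ← Ψ.apply_symm_apply p, Ψ.dist_eq]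
    calc dist q (Ψ.symm p) < min (r / 2) (1 / (4 * (K + 1))) * ρ := hq
      _ ≤ 1 / (4 * (K + 1)) * ρ := by gcongr; exact min_le_right _ _
      _ = ρ / (4 * (K + 1)) := one_div_mul_eq_div _ _
  obtain ⟨hqw, hqγ⟩ := ball_subset_epigraph hγi (hK.mono hwZ) hw hρ hqp
  obtain ⟨q', hq'Ω, hq'q⟩ : Ψ q ∈ Ψ '' (Ω ∩ ball z r) :=
    hΩ ▸ ⟨Ψ.image_ball z r ▸ hwZ hqw, hqγ⟩
  rw [Ψ.injective hq'q] at hq'Ω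
  exact ⟨hq'Ω.1, by rwa [mem_ball, ← Ψ.dist_eq]⟩

lemma exists_hasInteriorBalls_of_isCompact {Ω S : Set (Rn n)} (hS : IsCompact S)
    (hloc : ∀ z ∈ S, ∃ c > 0, ∀ᶠ z' in 𝓝 z, z' ∈ closure Ω → HasInteriorBalls Ω c z') :
    ∃ c > 0, ∀ z ∈ S, z ∈ closure Ω → HasInteriorBalls Ω c z := by
  -- `HasInteriorBalls Ω c z` is antitone in `c`, so each local constant gives a neighbourhood
  -- of `0` of admissible `c`, and compactness of `S` intersects finitely many of them.
  have : ∀ᶠ c in 𝓝 (0 : ℝ), ∀ z ∈ S, z ∈ closure Ω → HasInteriorBalls Ω c z := by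
    refine hS.eventually_forall_of_forall_eventually fun z hz => ?_
    obtain ⟨c, hc, hev⟩ := hloc z hz
    filter_upwards [Filter.Eventually.prod_nhds (Iic_mem_nhds hc) hev] with p hp hpΩ
    exact (hp.2 hpΩ).mono hp.1
  obtain ⟨c, hc, hpos⟩ :=
    ((this.filter_mono nhdsWithin_le_nhds).and (self_mem_nhdsWithin (s := Ioi 0))).exists
  exact ⟨c, hpos, hc⟩

lemma HasInteriorBalls.of_frontier {Ω : Set (Rn n)} (hΩ : IsOpen Ω) {c : ℝ}
    (h : ∀ z ∈ frontier Ω, HasInteriorBalls Ω c z) {z : Rn n} (hz : z ∈ closure Ω) :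
    HasInteriorBalls Ω (min c 1 / 2) z := by
  intro ρ hρ hρc
  have hc1 := min_le_right c 1
  by_cases hin : ball z (ρ / 2) ⊆ Ω
  · refine ⟨z, (ball_subset_ball ?_).trans (subset_inter hin (ball_subset_ball (by linarith)))⟩
    nlinarith
  obtain ⟨p, ⟨hpcl, hpz⟩, hpΩ⟩ : ∃ p ∈ closure Ω ∩ ball z (ρ / 2), p ∉ Ω :=
    not_subset.1 fun hsub => hin (isPreconnected_ball.subset_of_closure_inter_subset hΩ
      (mem_closure_iff_nhds.1 hz _ (ball_mem_nhds z (by positivity))) hsub)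
  have hp : p ∈ frontier Ω := by rw [hΩ.frontier_eq]; exact ⟨hpcl, hpΩ⟩
  have hc := min_le_left c 1
  obtain ⟨q, hq⟩ := h p hp (ρ / 2) (by positivity) (by linarith)
  refine ⟨q, (ball_subset_ball ?_).trans
    (hq.trans (inter_subset_inter_right _ (ball_subset_ball' ?_)))⟩
  · nlinarith
  · linarith [mem_ball.1 hpz]

lemma hasLowerDensity_of_hasInteriorBalls {Ω : Set (Rn n)} {c : ℝ} (hc : 0 < c) (hc1 : c ≤ 1)
    (h : ∀ z ∈ closure Ω, HasInteriorBalls Ω c z) :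
    HasLowerDensity Ω ((c * c) ^ n).toNNReal := by
  intro z hz ρ hρ hρ1
  obtain ⟨p, hp⟩ := h z hz (min ρ c) (lt_min hρ hc) (min_le_right _ _)
  have hcρ : c * ρ ≤ min ρ c :=
    le_min (mul_le_of_le_one_left hρ.le hc1) (mul_le_of_le_one_right hc.le hρ1)
  calc (((c * c) ^ n).toNNReal : ℝ≥0∞) * volume (ball z ρ) = volume (ball p (c * c * ρ)) := by
        rw [Measure.addHaar_ball_mul_of_pos _ _ (by positivity), Measure.addHaar_ball_center,
          finrank_euclideanSpace_fin]
        rfl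
    _ ≤ volume (ball p (c * min ρ c)) :=
        measure_mono (ball_subset_ball (by rw [mul_assoc]; gcongr))
    _ ≤ volume (Ω ∩ ball z (min ρ c)) := measure_mono hp
    _ ≤ volume (Ω ∩ ball z ρ) :=
        measure_mono (inter_subset_inter_right _ (ball_subset_ball (min_le_left _ _)))

end InteriorBalls

lemma lastCoord_eq {n : ℕ} (hn : n ≠ 0) (x : Rn n) : lastCoord x = x ⟨n - 1, by omega⟩ :=
  dif_neg hn

theorem IsC1Domain.exists_hasLowerDensity {n : ℕ} (hn : n ≠ 0) {α : ℝ} {Ω : Set (Rn n)}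
    (hΩ : IsC1Domain n α Ω) : ∃ κ : ℝ≥0, κ ≠ 0 ∧ HasLowerDensity Ω κ := by
  obtain ⟨hopen, hbdd, hchart⟩ := hΩ
  have hloc (z : Rn n) (hz : z ∈ frontier Ω) :
      ∃ c > 0, ∀ᶠ z' in 𝓝 z, z' ∈ closure Ω → HasInteriorBalls Ω c z' := by
    obtain ⟨r, Ψ, γ, hr, hγ, -, hind, hgraph⟩ := hchart z hz
    refine eventually_hasInteriorBalls_of_chart hr hγ (i := ⟨n - 1, by omega⟩)
      (fun x t => hind _ _ fun j hj => ?_) (by simpa only [lastCoord_eq hn] using hgraph)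
    have : j ≠ ⟨n - 1, by omega⟩ := fun h => hj (h ▸ rfl)
    simp [this]
  obtain ⟨c, hc, hfr⟩ := exists_hasInteriorBalls_of_isCompact
    (hbdd.isCompact_closure.of_isClosed_subset isClosed_frontier frontier_subset_closure) hloc
  have hint (z : Rn n) (hz : z ∈ closure Ω) : HasInteriorBalls Ω (min c 1 / 2) z :=
    HasInteriorBalls.of_frontier hopen (fun z' hz' => hfr z' hz' (frontier_subset_closure hz')) hz
  exact ⟨_, (Real.toNNReal_pos.2 (by positivity)).ne',
    hasLowerDensity_of_hasInteriorBalls (by positivity) (by linarith [min_le_right c 1]) hint⟩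

theorem statement5_general
    (n : ℕ) (hn : 2 ≤ n) (α : ℝ)
    (Ω : Set (Rn n)) (hΩ : IsC1Domain n α Ω)
    (β : ℝ) (hβ : 0 < β) :
    ∃ c : ℝ, 0 < c ∧
      ∀ (x₀ : Rn n), x₀ ∈ closure Ω →
      ∀ R : ℝ, 0 < R → R ≤ 1 →
      ∀ g : Rn n → ℝ, MeasureTheory.IntegrableOn g (Ω ∩ ball x₀ (2 * R)) →
      ∀ x ∈ closure Ω ∩ ball x₀ (R / 4), ∀ y ∈ closure Ω ∩ ball x₀ (R / 4),
        Filter.Tendsto (fun ρ : ℝ => setAvg n (Ω ∩ ball x ρ) g)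
          (nhdsWithin 0 (Set.Ioi 0)) (nhds (g x)) →
        Filter.Tendsto (fun ρ : ℝ => setAvg n (Ω ∩ ball y ρ) g)
          (nhdsWithin 0 (Set.Ioi 0)) (nhds (g y)) →
        ENNReal.ofReal |g x - g y| ≤
          ENNReal.ofReal c * (sharpMax n β R Ω g x + sharpMax n β R Ω g y) *
            ENNReal.ofReal (‖x - y‖ ^ β) := by
  obtain ⟨κ, hκ, hΩκ⟩ := hΩ.exists_hasLowerDensity (by omega)
  set C : ℝ≥0∞ :=
    2 ^ n / κ * ENNReal.ofReal (2 ^ β) * ((1 - ENNReal.ofReal (2⁻¹ ^ β))⁻¹ + 1)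
  have hq : ENNReal.ofReal (2⁻¹ ^ β) < 1 :=
    ENNReal.ofReal_lt_one.2 (Real.rpow_lt_one (by norm_num) (by norm_num) hβ)
  have hC : C ≠ ∞ := by
    have := (tsub_pos_of_lt hq).ne'
    have := ENNReal.coe_ne_zero.2 hκ
    finiteness
  have hC0 : C ≠ 0 := by
    have : (0 : ℝ) < 2 ^ β := by positivity
    simp [C, this]
  refine ⟨C.toReal, ENNReal.toReal_pos hC0 hC, ?_⟩
  intro x₀ _ R _ hR1 g hg x hx y hy hlimx hlimy
  have hxy : 2 * dist x y ≤ R := by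
    linarith [dist_triangle_right x y x₀, mem_ball.1 hx.2, mem_ball.1 hy.2]
  rw [ENNReal.ofReal_toReal hC, ← Real.dist_eq, ← edist_dist, ← dist_eq_norm]
  refine hΩκ.edist_le_sharpMax hκ hβ.le hR1 hx.1 hy.1 hxy ?_ hlimx hlimy
  exact hg.mono_set (inter_subset_inter_right _
    (ball_subset_ball' (by linarith [mem_ball.1 hx.2])))

/-- pointwise Hölder control of a function at `Ω`-Lebesgue points via the
fractional sharp maximal function. -/
theorem statement5
    (n : ℕ) (hn : 2 ≤ n) (s α : ℝ) (hs : 0 < s) (hs1 : s < 1) (hα : 0 < α) (hαs : α < s)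
    (Ω : Set (Rn n)) (hΩ : IsC1Domain n α Ω)
    (β : ℝ) (hβ : 0 < β) (hβ1 : β ≤ 1) :
    ∃ c : ℝ, 0 < c ∧
      ∀ (x₀ : Rn n), x₀ ∈ closure Ω →
      ∀ R : ℝ, 0 < R → R ≤ 1 →
      ∀ g : Rn n → ℝ, MeasureTheory.IntegrableOn g (Ω ∩ ball x₀ (2 * R)) →
      ∀ x ∈ closure Ω ∩ ball x₀ (R / 4), ∀ y ∈ closure Ω ∩ ball x₀ (R / 4),
        Filter.Tendsto (fun ρ : ℝ => setAvg n (Ω ∩ ball x ρ) g)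
          (nhdsWithin 0 (Set.Ioi 0)) (nhds (g x)) →
        Filter.Tendsto (fun ρ : ℝ => setAvg n (Ω ∩ ball y ρ) g)
          (nhdsWithin 0 (Set.Ioi 0)) (nhds (g y)) →
        ENNReal.ofReal |g x - g y| ≤
          ENNReal.ofReal c * (sharpMax n β R Ω g x + sharpMax n β R Ω g y) *
            ENNReal.ofReal (‖x - y‖ ^ β) :=
  statement5_general n hn α Ω hΩ β hβ

end NonlocalCZ
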